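/- arXiv:1804.02315 — 3 statements merged into one kernel-verified Lean document; each statement's English description precedes it below -/
import Mathlib

section
/- Let (A, M) be a strict Z₂-braided pair, with braiding σ on A, anti-involution Φ, and cylinder braiding κ_{M,X} : M ⊗ X → M ⊗ Φ(X). Then κ satisfies the twisted reflection equation: for all M in M and X, Y in A, (id_M ⊗ σ_{Φ(Y),Φ(X)}) ∘ (κ_{M,Y} ⊗ id_X) ∘ (id_M ⊗ σ_{Φ(X),Y}) ∘ (κ_{M,X} ⊗ id_Y) = (κ_{M,X} ⊗ id_Y) ∘ (id_M ⊗ σ_{Φ(Y),X}) ∘ (κ_{M,Y} ⊗ id_X) ∘ (id_M ⊗ σ_{X,Y}). -/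
open CategoryTheory

universe v u v' u'

/-- A strict `ℤ₂`-braided pair: a strict monoidal category `A` with a strict
anti-monoidal involution `Φ`, a braiding `σ` for which `Φ` is braided, a strict
pointed right `A`-module category `M`, and a cylinder braiding
`κ_{m,X} : m ⊗ X ⟶ m ⊗ Φ(X)` satisfying the axioms BP1 and BP2.
Strictness is recorded by equalities of objects, and the corresponding
coherences are expressed via `eqToHom`. -/
structure StrictZ2BraidedPair (A : Type u) (M : Type u')
    [Category.{v} A] [Category.{v'} M] where
  /-- the tensor product on objects -/
  t : A → A → A
  /-- the tensor unit -/
  unit : A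
  /-- the tensor product on morphisms -/
  tHom : ∀ {X X' Y Y' : A}, (X ⟶ X') → (Y ⟶ Y') → (t X Y ⟶ t X' Y')
  tHom_id : ∀ X Y : A, tHom (𝟙 X) (𝟙 Y) = 𝟙 (t X Y)
  tHom_comp : ∀ {X X' X'' Y Y' Y'' : A} (f : X ⟶ X') (f' : X' ⟶ X'')
    (g : Y ⟶ Y') (g' : Y' ⟶ Y''),
    tHom (f ≫ f') (g ≫ g') = tHom f g ≫ tHom f' g'
  /-- strict associativity -/
  assoc : ∀ X Y Z : A, t (t X Y) Z = t X (t Y Z)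
  unit_l : ∀ X : A, t unit X = X
  unit_r : ∀ X : A, t X unit = X
  assoc_hom : ∀ {X X' Y Y' Z Z' : A} (f : X ⟶ X') (g : Y ⟶ Y') (h : Z ⟶ Z'),
    tHom (tHom f g) h =
      eqToHom (assoc X Y Z) ≫ tHom f (tHom g h) ≫ eqToHom (assoc X' Y' Z').symm
  /-- the braiding -/
  σ : ∀ X Y : A, t X Y ⟶ t Y X
  σinv : ∀ X Y : A, t Y X ⟶ t X Y
  σ_σinv : ∀ X Y : A, σ X Y ≫ σinv X Y = 𝟙 (t X Y)
  σinv_σ : ∀ X Y : A, σinv X Y ≫ σ X Y = 𝟙 (t Y X)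
  σ_natural : ∀ {X X' Y Y' : A} (f : X ⟶ X') (g : Y ⟶ Y'),
    tHom f g ≫ σ X' Y' = σ X Y ≫ tHom g f
  hexagon₁ : ∀ X Y Z : A,
    σ X (t Y Z) =
      eqToHom (assoc X Y Z).symm ≫ tHom (σ X Y) (𝟙 Z) ≫ eqToHom (assoc Y X Z) ≫
        tHom (𝟙 Y) (σ X Z) ≫ eqToHom (assoc Y Z X).symm
  hexagon₂ : ∀ X Y Z : A,
    σ (t X Y) Z =
      eqToHom (assoc X Y Z) ≫ tHom (𝟙 X) (σ Y Z) ≫ eqToHom (assoc X Z Y).symm ≫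
        tHom (σ X Z) (𝟙 Y) ≫ eqToHom (assoc Z X Y)
  /-- the strict anti-monoidal involution -/
  Φ : A ⥤ A
  Φ_anti : ∀ X Y : A, Φ.obj (t X Y) = t (Φ.obj Y) (Φ.obj X)
  Φ_anti_hom : ∀ {X X' Y Y' : A} (f : X ⟶ X') (g : Y ⟶ Y'),
    Φ.map (tHom f g) =
      eqToHom (Φ_anti X Y) ≫ tHom (Φ.map g) (Φ.map f) ≫ eqToHom (Φ_anti X' Y').symm
  Φ_unit : Φ.obj unit = unit
  Φ_sq : ∀ X : A, Φ.obj (Φ.obj X) = X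
  Φ_sq_hom : ∀ {X Y : A} (f : X ⟶ Y),
    Φ.map (Φ.map f) = eqToHom (Φ_sq X) ≫ f ≫ eqToHom (Φ_sq Y).symm
  /-- `Φ` is braided -/
  Φ_braided : ∀ X Y : A,
    Φ.map (σ X Y) =
      eqToHom (Φ_anti X Y) ≫ σ (Φ.obj Y) (Φ.obj X) ≫ eqToHom (Φ_anti Y X).symm
  /-- the right module category action -/
  act : M → A → M
  actHom : ∀ {m m' : M} {X X' : A}, (m ⟶ m') → (X ⟶ X') → (act m X ⟶ act m' X')
  actHom_id : ∀ (m : M) (X : A), actHom (𝟙 m) (𝟙 X) = 𝟙 (act m X)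
  actHom_comp : ∀ {m m' m'' : M} {X X' X'' : A} (f : m ⟶ m') (f' : m' ⟶ m'')
    (g : X ⟶ X') (g' : X' ⟶ X''),
    actHom (f ≫ f') (g ≫ g') = actHom f g ≫ actHom f' g'
  act_assoc : ∀ (m : M) (X Y : A), act (act m X) Y = act m (t X Y)
  act_unit : ∀ m : M, act m unit = m
  act_assoc_hom : ∀ {m m' : M} {X X' Y Y' : A} (f : m ⟶ m') (g : X ⟶ X')
    (h : Y ⟶ Y'),
    actHom (actHom f g) h =
      eqToHom (act_assoc m X Y) ≫ actHom f (tHom g h) ≫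
        eqToHom (act_assoc m' X' Y').symm
  /-- the pointing of the module category -/
  pt : M
  /-- the `ℤ₂`-cylinder braiding -/
  κ : ∀ (m : M) (X : A), act m X ⟶ act m (Φ.obj X)
  κinv : ∀ (m : M) (X : A), act m (Φ.obj X) ⟶ act m X
  κ_κinv : ∀ (m : M) (X : A), κ m X ≫ κinv m X = 𝟙 (act m X)
  κinv_κ : ∀ (m : M) (X : A), κinv m X ≫ κ m X = 𝟙 (act m (Φ.obj X))
  κ_natural : ∀ {m m' : M} {X X' : A} (f : m ⟶ m') (g : X ⟶ X'),
    actHom f g ≫ κ m' X' = κ m X ≫ actHom f (Φ.map g)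
  /-- axiom BP1 -/
  BP1 : ∀ (m : M) (X Y : A),
    κ (act m X) Y =
      eqToHom (act_assoc m X Y) ≫ actHom (𝟙 m) (σ X Y) ≫
        eqToHom (act_assoc m Y X).symm ≫ actHom (κ m Y) (𝟙 X) ≫
        eqToHom (act_assoc m (Φ.obj Y) X) ≫ actHom (𝟙 m) (σ (Φ.obj Y) X) ≫
        eqToHom (act_assoc m X (Φ.obj Y)).symm
  /-- axiom BP2 -/
  BP2 : ∀ (m : M) (X Y : A),
    κ m (t X Y) =
      eqToHom (act_assoc m X Y).symm ≫ actHom (κ m X) (𝟙 Y) ≫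
        eqToHom (act_assoc m (Φ.obj X) Y) ≫ actHom (𝟙 m) (σ (Φ.obj X) Y) ≫
        eqToHom (act_assoc m Y (Φ.obj X)).symm ≫ actHom (κ m Y) (𝟙 (Φ.obj X)) ≫
        eqToHom (act_assoc m (Φ.obj Y) (Φ.obj X)) ≫
        eqToHom (congrArg (act m) (Φ_anti X Y).symm)

/-- In a strict `ℤ₂`-braided pair the cylinder braiding `κ` satisfies the
`Φ`-twisted reflection equation:
`(id_M ⊗ σ_{Φ(Y),Φ(X)}) ∘ (κ_{M,Y} ⊗ id_X) ∘ (id_M ⊗ σ_{Φ(X),Y}) ∘ (κ_{M,X} ⊗ id_Y)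
 = (κ_{M,X} ⊗ id_Y) ∘ (id_M ⊗ σ_{Φ(Y),X}) ∘ (κ_{M,Y} ⊗ id_X) ∘ (id_M ⊗ σ_{X,Y})`
(with `eqToHom`s regrouping the strictly equal objects). -/
theorem StrictZ2BraidedPair.twisted_reflection {A : Type u} {M : Type u'}
    [Category.{v} A] [Category.{v'} M] (P : StrictZ2BraidedPair A M)
    (m : M) (X Y : A) :
    P.actHom (P.κ m X) (𝟙 Y) ≫
      eqToHom (P.act_assoc m (P.Φ.obj X) Y) ≫
      P.actHom (𝟙 m) (P.σ (P.Φ.obj X) Y) ≫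
      eqToHom (P.act_assoc m Y (P.Φ.obj X)).symm ≫
      P.actHom (P.κ m Y) (𝟙 (P.Φ.obj X)) ≫
      eqToHom (P.act_assoc m (P.Φ.obj Y) (P.Φ.obj X)) ≫
      P.actHom (𝟙 m) (P.σ (P.Φ.obj Y) (P.Φ.obj X)) =
    eqToHom (P.act_assoc m X Y) ≫
      P.actHom (𝟙 m) (P.σ X Y) ≫
      eqToHom (P.act_assoc m Y X).symm ≫
      P.actHom (P.κ m Y) (𝟙 X) ≫
      eqToHom (P.act_assoc m (P.Φ.obj Y) X) ≫
      P.actHom (𝟙 m) (P.σ (P.Φ.obj Y) X) ≫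
      eqToHom (P.act_assoc m X (P.Φ.obj Y)).symm ≫
      P.actHom (P.κ m X) (𝟙 (P.Φ.obj Y)) ≫
      eqToHom (P.act_assoc m (P.Φ.obj X) (P.Φ.obj Y)) := by
  have h := P.κ_natural (P.κ m X) (𝟙 Y)
  rw [P.BP1, P.BP1, P.Φ.map_id] at h
  rw [← cancel_mono (eqToHom (P.act_assoc m (P.Φ.obj X) (P.Φ.obj Y)).symm)]
  simp only [Category.assoc, eqToHom_trans, eqToHom_refl, Category.comp_id] at h ⊢
  exact h
end

section
/- Let F : A → B be a monoidal equivalence of monoidal categories, Φ : A → A a monoidal functor, and t : Φ ∘ Φ ⇒ id_A a monoidal natural isomorphism with Φ(t_X) = t_{Φ(X)}. Then Ψ := F ∘ Φ ∘ F⁻¹ is a monoidal functor B → B admitting a monoidal natural isomorphism π : Ψ ∘ Ψ ⇒ id_B, such that Ψ ∘ F is monoidally isomorphic to F ∘ Φ and the isomorphism π_F : Ψ²F ⇒ F agrees with F(t) : FΦ² ⇒ F under the identification Ψ²F ≅ FΦ². -/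
open CategoryTheory

variable {A : Type*} [Category A] [MonoidalCategory A]
variable {B : Type*} [Category B] [MonoidalCategory B]

/-- The data of a transported anti-involution: a monoidal functor `Ψ : B ⥤ B`
with a monoidal natural isomorphism `π : Ψ² ⇒ id_B`, a monoidal natural
isomorphism `e : Ψ ∘ F ≅ F ∘ Φ`, such that under the identification `e`
the isomorphism `π_F : Ψ²F ⇒ F` agrees with `F(t) : FΦ² ⇒ F`. -/
structure TransportedInvolution (F : A ⥤ B) [F.Monoidal]
    (Φ : A ⥤ A) [Φ.Monoidal] (t : Φ ⋙ Φ ⟶ 𝟭 A) where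
  Ψ : B ⥤ B
  [instΨ : Ψ.Monoidal]
  π : Ψ ⋙ Ψ ⟶ 𝟭 B
  π_monoidal : NatTrans.IsMonoidal π
  π_iso : IsIso π
  e : F ⋙ Ψ ⟶ Φ ⋙ F
  e_monoidal : NatTrans.IsMonoidal e
  e_iso : IsIso e
  compat : ∀ X : A,
    Ψ.map (e.app X) ≫ e.app (Φ.obj X) ≫ F.map (t.app X) = π.app (F.obj X)

/-!
Take `Ψ := F Φ F⁻¹`. Conjugation by the monoidal equivalence `F` preserves monoidal natural
transformations and is compatible with composition up to the monoidal isomorphisms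
`η⁻¹ : F⁻¹F ≅ id` and `ε : FF⁻¹ ≅ id`; conjugating `t` and composing with these gives `π`.
That `π_F` matches `F(t)` is naturality of `η⁻¹` and of `t`, together with the triangle identity
`ε_F = F(η⁻¹)`.
-/

namespace CategoryTheory.Equivalence

variable {C D : Type*} [Category C] [Category D] (E : C ≌ D)

abbrev conjFunctor (Φ : C ⥤ C) : D ⥤ D := E.inverse ⋙ Φ ⋙ E.functor

def conjMap {Φ₁ Φ₂ : C ⥤ C} (α : Φ₁ ⟶ Φ₂) : E.conjFunctor Φ₁ ⟶ E.conjFunctor Φ₂ :=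
  Functor.whiskerLeft E.inverse (Functor.whiskerRight α E.functor)

def functorCompConjFunctorIso (Φ : C ⥤ C) : E.functor ⋙ E.conjFunctor Φ ≅ Φ ⋙ E.functor :=
  (Functor.associator _ _ _).symm ≪≫ Functor.isoWhiskerRight E.unitIso.symm _ ≪≫
    Functor.leftUnitor _

def conjFunctorCompIso (Φ₁ Φ₂ : C ⥤ C) :
    E.conjFunctor Φ₁ ⋙ E.conjFunctor Φ₂ ≅ E.conjFunctor (Φ₁ ⋙ Φ₂) :=
  Functor.associator _ _ _ ≪≫ Functor.isoWhiskerLeft E.inverse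
    (Functor.associator _ _ _ ≪≫ Functor.isoWhiskerLeft Φ₁ (E.functorCompConjFunctorIso Φ₂) ≪≫
      (Functor.associator _ _ _).symm)

def conjFunctorIdIso : E.conjFunctor (𝟭 C) ≅ 𝟭 D :=
  Functor.isoWhiskerLeft E.inverse E.functor.leftUnitor ≪≫ E.counitIso

@[simp]
lemma functorCompConjFunctorIso_hom_app (Φ : C ⥤ C) (X : C) :
    (E.functorCompConjFunctorIso Φ).hom.app X = E.functor.map (Φ.map (E.unitInv.app X)) := by
  simp [functorCompConjFunctorIso]

@[simp]
lemma conjFunctorCompIso_hom_app (Φ₁ Φ₂ : C ⥤ C) (Y : D) :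
    (E.conjFunctorCompIso Φ₁ Φ₂).hom.app Y =
      E.functor.map (Φ₂.map (E.unitInv.app (Φ₁.obj (E.inverse.obj Y)))) := by
  simp [conjFunctorCompIso]

@[simp]
lemma conjMap_app {Φ₁ Φ₂ : C ⥤ C} (α : Φ₁ ⟶ Φ₂) (Y : D) :
    (E.conjMap α).app Y = E.functor.map (α.app (E.inverse.obj Y)) := rfl

@[simp]
lemma conjFunctorIdIso_hom_app (Y : D) : E.conjFunctorIdIso.hom.app Y = E.counit.app Y := by
  simp [conjFunctorIdIso]

instance {Φ₁ Φ₂ : C ⥤ C} (α : Φ₁ ⟶ Φ₂) [IsIso α] : IsIso (E.conjMap α) := by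
  unfold conjMap; infer_instance

def conjCompToId {Φ₁ Φ₂ : C ⥤ C} (α : Φ₁ ⋙ Φ₂ ⟶ 𝟭 C) :
    E.conjFunctor Φ₁ ⋙ E.conjFunctor Φ₂ ⟶ 𝟭 D :=
  (E.conjFunctorCompIso Φ₁ Φ₂).hom ≫ E.conjMap α ≫ E.conjFunctorIdIso.hom

instance {Φ₁ Φ₂ : C ⥤ C} (α : Φ₁ ⋙ Φ₂ ⟶ 𝟭 C) [IsIso α] : IsIso (E.conjCompToId α) := by
  unfold conjCompToId; infer_instance

lemma conjCompToId_app_functor_obj {Φ₁ Φ₂ : C ⥤ C} (α : Φ₁ ⋙ Φ₂ ⟶ 𝟭 C) (X : C) :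
    (E.conjFunctor Φ₂).map ((E.functorCompConjFunctorIso Φ₁).hom.app X) ≫
      (E.functorCompConjFunctorIso Φ₂).hom.app (Φ₁.obj X) ≫ E.functor.map (α.app X) =
    (E.conjCompToId α).app (E.functor.obj X) := by
  simp only [conjCompToId, NatTrans.comp_app, conjFunctorCompIso_hom_app, conjMap_app,
    conjFunctorIdIso_hom_app, functorCompConjFunctorIso_hom_app, Functor.comp_map,
    counit_app_functor, ← Functor.map_comp]
  congr 1
  have hu := E.unitInv.naturality (Φ₁.map (E.unitInv.app X))
  have hα := α.naturality (E.unitInv.app X)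
  dsimp at hu hα
  rw [← Φ₂.map_comp_assoc, hu, Φ₂.map_comp_assoc, hα]

section Monoidal

variable [MonoidalCategory C] [MonoidalCategory D]
  [E.functor.Monoidal] [E.inverse.Monoidal] [E.IsMonoidal]

instance (Φ : C ⥤ C) [Φ.Monoidal] : NatTrans.IsMonoidal (E.functorCompConjFunctorIso Φ).hom := by
  unfold functorCompConjFunctorIso; dsimp; infer_instance

instance {Φ₁ Φ₂ : C ⥤ C} [Φ₁.Monoidal] [Φ₂.Monoidal] (α : Φ₁ ⟶ Φ₂) [NatTrans.IsMonoidal α] :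
    NatTrans.IsMonoidal (E.conjMap α) := by
  unfold conjMap; infer_instance

instance (Φ₁ Φ₂ : C ⥤ C) [Φ₁.Monoidal] [Φ₂.Monoidal] :
    NatTrans.IsMonoidal (E.conjFunctorCompIso Φ₁ Φ₂).hom := by
  unfold conjFunctorCompIso; dsimp; infer_instance

instance : NatTrans.IsMonoidal E.conjFunctorIdIso.hom := by
  unfold conjFunctorIdIso; dsimp; infer_instance

instance {Φ₁ Φ₂ : C ⥤ C} [Φ₁.Monoidal] [Φ₂.Monoidal] (α : Φ₁ ⋙ Φ₂ ⟶ 𝟭 C)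
    [NatTrans.IsMonoidal α] : NatTrans.IsMonoidal (E.conjCompToId α) := by
  unfold conjCompToId; infer_instance

noncomputable def transportedInvolution (Φ : C ⥤ C) [Φ.Monoidal]
    (t : Φ ⋙ Φ ⟶ 𝟭 C) [NatTrans.IsMonoidal t] [IsIso t] :
    TransportedInvolution E.functor Φ t where
  Ψ := E.conjFunctor Φ
  π := E.conjCompToId t
  π_monoidal := inferInstance
  π_iso := inferInstance
  e := (E.functorCompConjFunctorIso Φ).hom
  e_monoidal := inferInstance
  e_iso := inferInstance
  compat := E.conjCompToId_app_functor_obj t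

end Monoidal

end CategoryTheory.Equivalence

theorem transport_anti_involution_general (F : A ⥤ B) [F.Monoidal] [F.IsEquivalence]
    (Φ : A ⥤ A) [Φ.Monoidal] (t : Φ ⋙ Φ ⟶ 𝟭 A)
    [NatTrans.IsMonoidal t] [IsIso t] :
    Nonempty (TransportedInvolution F Φ t) := by
  let E := F.asEquivalence
  let : E.functor.Monoidal := ‹F.Monoidal›
  let : E.inverse.Monoidal := E.inverseMonoidal
  -- `inverseMonoidal` is the right-adjoint lax structure, for which the adjunction is monoidal.
  have : E.IsMonoidal :=
    (inferInstance : letI := E.toAdjunction.rightAdjointLaxMonoidal; E.toAdjunction.IsMonoidal)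
  exact ⟨E.transportedInvolution Φ t⟩

/-- Let `F : A ⥤ B` be a monoidal equivalence, `Φ : A ⥤ A` a monoidal functor and
`t : Φ² ⇒ id_A` a monoidal natural isomorphism with `Φ(t_X) = t_{Φ(X)}`. Then there
is a monoidal functor `Ψ : B ⥤ B` (namely `F ∘ Φ ∘ F⁻¹`) with a monoidal natural
isomorphism `π : Ψ² ⇒ id_B`, such that `Ψ ∘ F ≅ F ∘ Φ` monoidally and the square
comparing `π_F` with `F(t)` commutes. -/
theorem transport_anti_involution (F : A ⥤ B) [F.Monoidal] [F.IsEquivalence]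
    (Φ : A ⥤ A) [Φ.Monoidal] (t : Φ ⋙ Φ ⟶ 𝟭 A)
    [NatTrans.IsMonoidal t] [IsIso t]
    (ht : ∀ X : A, Φ.map (t.app X) = t.app (Φ.obj X)) :
    Nonempty (TransportedInvolution F Φ t) :=
  transport_anti_involution_general F Φ t
end

section
/- Let H be a quasi-triangular Hopf algebra, φ an R-preserving Hopf involution, and B ⊂ H a quasi-triangular coideal subalgebra with universal K-matrix K ∈ B ⊗ H. Then K satisfies the φ-twisted reflection equation in B ⊗ H ⊗ H: R₃₂ K₁₃ R₂₃^φ K₁₂ = K₁₂ R₃₂^φ K₁₃ R₂₃, where R^φ := (φ ⊗ id)(R). -/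
/-!
Since `K ∈ B ⊗ H`, the intertwining property (i) can be applied in the legs `1, 2` to
`(Δ ⊗ id)(K)`: `K₁₂ (Δ ⊗ id)(K) = (id ⊗ φ ⊗ id)((Δ ⊗ id)(K)) K₁₂`. Expanding `(Δ ⊗ id)(K)`
by (ii), the right-hand side becomes `K₁₂ R₃₂^φ K₁₃ R₂₃`. On the left, `φ` in the middle leg
fixes `K₁₃`, turns `R₂₃` into `R₂₃^φ`, and turns `R₃₂^φ` into `R₃₂` because `(φ ⊗ φ)(R) = R`.
-/

open scoped TensorProduct

noncomputable section

variable (k : Type*) [CommRing k] (H : Type*) [Ring H] [HopfAlgebra k H]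

/-- Embedding of `H ⊗ H` into legs 1,2 of `H ⊗ H ⊗ H`. -/
def leg12 : H ⊗[k] H →ₐ[k] H ⊗[k] (H ⊗[k] H) :=
  Algebra.TensorProduct.map (AlgHom.id k H) Algebra.TensorProduct.includeLeft

/-- Embedding of `H ⊗ H` into legs 1,3 of `H ⊗ H ⊗ H`. -/
def leg13 : H ⊗[k] H →ₐ[k] H ⊗[k] (H ⊗[k] H) :=
  Algebra.TensorProduct.map (AlgHom.id k H) Algebra.TensorProduct.includeRight

/-- Embedding of `H ⊗ H` into legs 2,3 of `H ⊗ H ⊗ H`. -/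
def leg23 : H ⊗[k] H →ₐ[k] H ⊗[k] (H ⊗[k] H) :=
  Algebra.TensorProduct.includeRight

/-- `Δ ⊗ id : H ⊗ H → H ⊗ H ⊗ H`. -/
def comulLeft : H ⊗[k] H →ₐ[k] H ⊗[k] (H ⊗[k] H) :=
  (Algebra.TensorProduct.assoc k k k H H H).toAlgHom.comp
    (Algebra.TensorProduct.map (Bialgebra.comulAlgHom k H) (AlgHom.id k H))

/-- `id ⊗ Δ : H ⊗ H → H ⊗ H ⊗ H`. -/
def comulRight : H ⊗[k] H →ₐ[k] H ⊗[k] (H ⊗[k] H) :=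
  Algebra.TensorProduct.map (AlgHom.id k H) (Bialgebra.comulAlgHom k H)

/-- The swap `τ : H ⊗ H → H ⊗ H`. -/
def swapHH : H ⊗[k] H →ₐ[k] H ⊗[k] H := (Algebra.TensorProduct.comm k H H).toAlgHom

section TwistedReflection

open Algebra.TensorProduct (map)

variable {k H}

def mapMiddle (φ : H →ₐ[k] H) : H ⊗[k] (H ⊗[k] H) →ₐ[k] H ⊗[k] (H ⊗[k] H) :=
  map (AlgHom.id k H) (map φ (AlgHom.id k H))

lemma mapMiddle_leg12 (φ : H →ₐ[k] H) (x : H ⊗[k] H) :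
    mapMiddle φ (leg12 k H x) = leg12 k H (map (AlgHom.id k H) φ x) := by
  induction x using TensorProduct.induction_on with
  | zero => simp
  | tmul a b => simp [mapMiddle, leg12]
  | add x y hx hy => simp only [map_add, hx, hy]

lemma mapMiddle_leg13 (φ : H →ₐ[k] H) (x : H ⊗[k] H) :
    mapMiddle φ (leg13 k H x) = leg13 k H x := by
  induction x using TensorProduct.induction_on with
  | zero => simp
  | tmul a b => simp [mapMiddle, leg13]
  | add x y hx hy => simp only [map_add, hx, hy]

lemma mapMiddle_leg23 (φ : H →ₐ[k] H) (x : H ⊗[k] H) :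
    mapMiddle φ (leg23 k H x) = leg23 k H (map φ (AlgHom.id k H) x) := by
  simp [mapMiddle, leg23]

lemma map_left_swapHH_map_left {φ : H →ₐ[k] H} {R : H ⊗[k] H} (hφR : map φ φ R = R) :
    map φ (AlgHom.id k H) (swapHH k H (map φ (AlgHom.id k H) R)) = swapHH k H R := by
  have hswap : swapHH k H (map φ (AlgHom.id k H) R) = map (AlgHom.id k H) φ (swapHH k H R) :=
    Algebra.TensorProduct.comm_comp_map_apply _ _ R
  rw [hswap, ← AlgHom.comp_apply, ← Algebra.TensorProduct.map_comp, AlgHom.comp_id,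
    AlgHom.id_comp]
  exact (Algebra.TensorProduct.comm_comp_map_apply φ φ R).symm.trans (congrArg _ hφR)

lemma commute_leg12_one_tmul_one_tmul (x : H ⊗[k] H) (h : H) :
    Commute (leg12 k H x) ((1 : H) ⊗ₜ[k] ((1 : H) ⊗ₜ[k] h)) := by
  induction x using TensorProduct.induction_on with
  | zero => simp
  | tmul a b => simp [Commute, SemiconjBy, leg12, Algebra.TensorProduct.tmul_mul_tmul]
  | add x y hx hy => simp only [map_add]; exact hx.add_left hy

lemma comulLeft_tmul (a h : H) :
    comulLeft k H (a ⊗ₜ[k] h) =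
      leg12 k H (Coalgebra.comul (R := k) a) * ((1 : H) ⊗ₜ[k] ((1 : H) ⊗ₜ[k] h)) := by
  simp only [comulLeft, AlgHom.comp_apply, Algebra.TensorProduct.map_tmul,
    Bialgebra.comulAlgHom_apply, AlgHom.id_apply]
  induction Coalgebra.comul (R := k) a using TensorProduct.induction_on with
  | zero => simp
  | tmul b c => simp [leg12, Algebra.TensorProduct.tmul_mul_tmul]
  | add x y hx hy => simp only [TensorProduct.add_tmul, map_add, hx, hy, add_mul]

lemma leg12_mul_comulLeft_of_mem_range {φ : H →ₐ[k] H} {B : Subalgebra k H} {K : H ⊗[k] H}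
    (hK_intertwine : ∀ b ∈ B,
      K * Coalgebra.comul (R := k) b = map (AlgHom.id k H) φ (Coalgebra.comul (R := k) b) * K)
    {x : H ⊗[k] H} (hx : x ∈ LinearMap.range (TensorProduct.map
      (Subalgebra.toSubmodule B).subtype (LinearMap.id : H →ₗ[k] H))) :
    leg12 k H K * comulLeft k H x = mapMiddle φ (comulLeft k H x) * leg12 k H K := by
  obtain ⟨w, rfl⟩ := hx
  induction w using TensorProduct.induction_on with
  | zero => simp
  | tmul b h =>
    have hcomm := commute_leg12_one_tmul_one_tmul (k := k) K h
    have hfix : mapMiddle φ ((1 : H) ⊗ₜ[k] ((1 : H) ⊗ₜ[k] h)) = 1 ⊗ₜ[k] (1 ⊗ₜ[k] h) := by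
      simp [mapMiddle]
    calc leg12 k H K * comulLeft k H (b ⊗ₜ[k] h)
        = leg12 k H (K * Coalgebra.comul (R := k) (b : H)) * (1 ⊗ₜ[k] (1 ⊗ₜ[k] h)) := by
          rw [comulLeft_tmul, ← mul_assoc, ← map_mul]
      _ = leg12 k H (map (AlgHom.id k H) φ (Coalgebra.comul (R := k) (b : H))) *
            (1 ⊗ₜ[k] (1 ⊗ₜ[k] h)) * leg12 k H K := by
          rw [hK_intertwine b b.2, map_mul, mul_assoc, hcomm.eq, ← mul_assoc]
      _ = mapMiddle φ (comulLeft k H (b ⊗ₜ[k] h)) * leg12 k H K := by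
          rw [comulLeft_tmul, map_mul, mapMiddle_leg12, hfix]
  | add x y hx hy => simp only [map_add, mul_add, add_mul, hx, hy]

end TwistedReflection

theorem universal_K_matrix_twisted_reflection
    (φ : H →ₐ[k] H)
    (R : H ⊗[k] H)
    (hφR : Algebra.TensorProduct.map φ φ R = R)
    (B : Subalgebra k H)
    (K : H ⊗[k] H)
    (hK_mem : K ∈ LinearMap.range (TensorProduct.map
      (Subalgebra.toSubmodule B).subtype (LinearMap.id : H →ₗ[k] H)))
    (hK_intertwine : ∀ b ∈ B,
      K * Coalgebra.comul (R := k) (b : H) =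
        Algebra.TensorProduct.map (AlgHom.id k H) φ (Coalgebra.comul (R := k) (b : H)) * K)
    (hK_comul_left : comulLeft k H K =
      leg23 k H (swapHH k H (Algebra.TensorProduct.map φ (AlgHom.id k H) R)) *
        leg13 k H K * leg23 k H R) :
    leg23 k H (swapHH k H R) * leg13 k H K *
        leg23 k H (Algebra.TensorProduct.map φ (AlgHom.id k H) R) * leg12 k H K =
      leg12 k H K *
        leg23 k H (swapHH k H (Algebra.TensorProduct.map φ (AlgHom.id k H) R)) *
        leg13 k H K * leg23 k H R := by
  calc leg23 k H (swapHH k H R) * leg13 k H K *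
        leg23 k H (Algebra.TensorProduct.map φ (AlgHom.id k H) R) * leg12 k H K
      = mapMiddle φ (comulLeft k H K) * leg12 k H K := by
        rw [hK_comul_left, map_mul, map_mul, mapMiddle_leg23, mapMiddle_leg13, mapMiddle_leg23,
          map_left_swapHH_map_left hφR]
    _ = leg12 k H K * comulLeft k H K :=
        (leg12_mul_comulLeft_of_mem_range hK_intertwine hK_mem).symm
    _ = _ := by rw [hK_comul_left, ← mul_assoc, ← mul_assoc]
end
end
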